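/- For every twice continuously differentiable matrix field P : ℝ³ → ℝ^{3×3}, the identity −2·Curl((Curl(skew P))ᵀ) + Curl(tr((Curl(skew P))ᵀ)·𝟙) = 0 holds at every point of ℝ³. -/

import Mathlib

open Matrix

/-- Partial derivative in direction `j` of a scalar field on `ℝ³`. -/
noncomputable def pd (j : Fin 3) (f : (Fin 3 → ℝ) → ℝ) (x : Fin 3 → ℝ) : ℝ :=
  fderiv ℝ f x (Pi.single j 1)

/-- Gradient of a scalar field on `ℝ³`. -/
noncomputable def grad3 (f : (Fin 3 → ℝ) → ℝ) (x : Fin 3 → ℝ) : Fin 3 → ℝ :=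
  fun i => pd i f x

/-- Classical curl of a vector field on `ℝ³`. -/
noncomputable def vcurl (v : (Fin 3 → ℝ) → Fin 3 → ℝ) (x : Fin 3 → ℝ) : Fin 3 → ℝ :=
  ![pd 1 (fun y => v y 2) x - pd 2 (fun y => v y 1) x,
    pd 2 (fun y => v y 0) x - pd 0 (fun y => v y 2) x,
    pd 0 (fun y => v y 1) x - pd 1 (fun y => v y 0) x]

/-- Divergence of a vector field on `ℝ³`. -/
noncomputable def vdiv (v : (Fin 3 → ℝ) → Fin 3 → ℝ) (x : Fin 3 → ℝ) : ℝ :=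
  ∑ i, pd i (fun y => v y i) x

/-- Row-wise Curl of a matrix field on `ℝ³`: the `i`-th row of `mCurl P`
is the curl of the `i`-th row of `P`. -/
noncomputable def mCurl (P : (Fin 3 → ℝ) → Matrix (Fin 3) (Fin 3) ℝ) (x : Fin 3 → ℝ) :
    Matrix (Fin 3) (Fin 3) ℝ :=
  Matrix.of fun i j => vcurl (fun y => P y i) x j

/-- Jacobian matrix of a vector field on `ℝ³`. -/
noncomputable def jac (v : (Fin 3 → ℝ) → Fin 3 → ℝ) (x : Fin 3 → ℝ) :
    Matrix (Fin 3) (Fin 3) ℝ :=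
  Matrix.of fun i j => pd j (fun y => v y i) x

/-- Axial vector of a (skew-symmetric) `3 × 3` matrix: with `A 1 2 = -a₁`,
`A 2 0 = -a₂`, `A 0 1 = -a₃` (so `A 2 1 = a₁`, `A 0 2 = a₂`, `A 1 0 = a₃`). -/
def axl (A : Matrix (Fin 3) (Fin 3) ℝ) : Fin 3 → ℝ :=
  ![A 2 1, A 0 2, A 1 0]

/-- The skew-symmetric matrix `anti a` characterized by `(anti a) ⬝ v = a × v`. -/
def antiM (a : Fin 3 → ℝ) : Matrix (Fin 3) (Fin 3) ℝ :=
  !![0, -a 2, a 1; a 2, 0, -a 0; -a 1, a 0, 0]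

/-- Symmetric part of a matrix. -/
noncomputable def symM (X : Matrix (Fin 3) (Fin 3) ℝ) : Matrix (Fin 3) (Fin 3) ℝ :=
  (1 / 2 : ℝ) • (X + Xᵀ)

/-- Skew-symmetric part of a matrix. -/
noncomputable def skewM (X : Matrix (Fin 3) (Fin 3) ℝ) : Matrix (Fin 3) (Fin 3) ℝ :=
  (1 / 2 : ℝ) • (X - Xᵀ)

/-- Deviatoric (trace-free) part of a matrix. -/
noncomputable def devM (X : Matrix (Fin 3) (Fin 3) ℝ) : Matrix (Fin 3) (Fin 3) ℝ :=
  X - (Matrix.trace X / 3) • (1 : Matrix (Fin 3) (Fin 3) ℝ)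

/-- Frobenius inner product `⟨X, Y⟩ = tr (X Yᵀ)`. -/
noncomputable def minner (X Y : Matrix (Fin 3) (Fin 3) ℝ) : ℝ :=
  Matrix.trace (X * Yᵀ)

/-- Squared Frobenius norm. -/
noncomputable def mnormSq (X : Matrix (Fin 3) (Fin 3) ℝ) : ℝ :=
  minner X X

/-- Squared Euclidean norm of a vector in `ℝ³`. -/
def vnormSq (v : Fin 3 → ℝ) : ℝ :=
  ∑ i, (v i) ^ 2

/-! The skew part `A = skew P` equals `anti a` for its axial vector `a`, and
`Curl (anti a) = (div a) 𝟙 - (∇a)ᵀ`. Hence `(Curl A)ᵀ = (div a) 𝟙 - ∇a` has trace `2 div a`, the two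
`Curl ((div a) 𝟙)` terms cancel, and what remains is `2 Curl (∇a)`, which vanishes because every row
of `∇a` is a gradient and the second partial derivatives of a `C²` function commute. -/

section PartialDerivative

variable {f g : (Fin 3 → ℝ) → ℝ} {x : Fin 3 → ℝ}

@[simp]
lemma pd_const (j : Fin 3) (c : ℝ) : pd j (fun _ => c) x = 0 := by
  simp [pd]

lemma pd_neg (j : Fin 3) : pd j (fun y => -f y) x = -pd j f x := by
  simp [pd, fderiv_fun_neg]

lemma pd_const_mul (j : Fin 3) (c : ℝ) : pd j (fun y => c * f y) x = c * pd j f x := by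
  change fderiv ℝ (c • f) x _ = _
  rw [fderiv_const_smul_field]
  rfl

lemma pd_sub (hf : DifferentiableAt ℝ f x) (hg : DifferentiableAt ℝ g x) (j : Fin 3) :
    pd j (fun y => f y - g y) x = pd j f x - pd j g x := by
  simp [pd, fderiv_fun_sub hf hg]

lemma ContDiff.pd {n : ℕ} (hf : ContDiff ℝ (n + 1) f) (j : Fin 3) : ContDiff ℝ n (pd j f) :=
  (hf.fderiv_right le_rfl).clm_apply contDiff_const

lemma pd_pd_eq_fderiv_fderiv (hf : ContDiff ℝ 2 f) (a b : Fin 3) :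
    pd a (pd b f) x = fderiv ℝ (fderiv ℝ f) x (Pi.single a 1) (Pi.single b 1) := by
  have hdf : DifferentiableAt ℝ (fderiv ℝ f) x :=
    (hf.fderiv_right (m := 1) le_rfl).differentiable one_ne_zero x
  change fderiv ℝ (fun y => fderiv ℝ f y (Pi.single b 1)) x (Pi.single a 1) = _
  simp [fderiv_clm_apply hdf (differentiableAt_const _)]

lemma pd_comm (hf : ContDiff ℝ 2 f) (a b : Fin 3) : pd a (pd b f) x = pd b (pd a f) x := by
  rw [pd_pd_eq_fderiv_fderiv hf, pd_pd_eq_fderiv_fderiv hf,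
    hf.contDiffAt.isSymmSndFDerivAt (by simp)]

end PartialDerivative

section Curl

variable {x : Fin 3 → ℝ}

lemma vcurl_grad3 {f : (Fin 3 → ℝ) → ℝ} (hf : ContDiff ℝ 2 f) : vcurl (grad3 f) x = 0 := by
  ext k
  fin_cases k <;> simp [vcurl, grad3, pd_comm hf]

lemma mCurl_jac {v : (Fin 3 → ℝ) → Fin 3 → ℝ} (hv : ∀ i, ContDiff ℝ 2 fun y => v y i) :
    mCurl (jac v) x = 0 := by
  ext i j
  exact congrFun (vcurl_grad3 (hv i)) j

lemma trace_jac (v : (Fin 3 → ℝ) → Fin 3 → ℝ) : trace (jac v x) = vdiv v x := rfl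

lemma mCurl_const_smul (c : ℝ) (M : (Fin 3 → ℝ) → Matrix (Fin 3) (Fin 3) ℝ) :
    mCurl (fun y => c • M y) x = c • mCurl M x := by
  ext i j
  fin_cases j <;> simp [mCurl, vcurl, pd_const_mul, mul_sub]

lemma mCurl_sub {M N : (Fin 3 → ℝ) → Matrix (Fin 3) (Fin 3) ℝ}
    (hM : ∀ i j, DifferentiableAt ℝ (fun y => M y i j) x)
    (hN : ∀ i j, DifferentiableAt ℝ (fun y => N y i j) x) :
    mCurl (fun y => M y - N y) x = mCurl M x - mCurl N x := by
  ext i j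
  fin_cases j <;>
    simp only [mCurl, vcurl, of_apply, Matrix.sub_apply, pd_sub (hM _ _) (hN _ _), Fin.isValue,
      cons_val, cons_val_zero, cons_val_one, Fin.zero_eta, Fin.mk_one, Fin.reduceFinMk] <;>
    ring

lemma mCurl_antiM (a : (Fin 3 → ℝ) → Fin 3 → ℝ) :
    mCurl (fun y => antiM (a y)) x = vdiv a x • 1 - (jac a x)ᵀ := by
  ext i j
  fin_cases i <;> fin_cases j <;>
    simp only [mCurl, vcurl, antiM, vdiv, jac, of_apply, Matrix.sub_apply, Matrix.smul_apply,
      transpose_apply, cons_val', cons_val, cons_val_fin_one, cons_val_zero, cons_val_one,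
      Fin.isValue, Fin.zero_eta, Fin.mk_one, Fin.reduceFinMk, Fin.reduceEq, pd_neg, pd_const,
      Fin.sum_univ_three, one_apply_eq, one_apply_ne, ne_eq, zero_ne_one, one_ne_zero,
      not_false_eq_true, smul_eq_mul] <;>
    ring

end Curl

lemma antiM_axl {A : Matrix (Fin 3) (Fin 3) ℝ} (hA : Aᵀ = -A) : antiM (axl A) = A := by
  have h : ∀ i j, A j i = -A i j := fun i j => congrFun (congrFun hA i) j
  have hdiag : ∀ i, A i i = 0 := fun i => by linarith [h i i]
  ext i j
  fin_cases i <;> fin_cases j <;> simp [antiM, axl, hdiag, h 0 1, h 0 2, h 1 2]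

lemma skewM_transpose (X : Matrix (Fin 3) (Fin 3) ℝ) : (skewM X)ᵀ = -skewM X := by
  simp only [skewM, transpose_smul, transpose_sub, transpose_transpose, ← smul_neg, neg_sub]

lemma transpose_mCurl_of_skew {A : (Fin 3 → ℝ) → Matrix (Fin 3) (Fin 3) ℝ}
    (hA : ∀ y, (A y)ᵀ = -A y) (x : Fin 3 → ℝ) :
    (mCurl A x)ᵀ = vdiv (fun y => axl (A y)) x • 1 - jac (fun y => axl (A y)) x := by
  have hA' : (fun y => antiM (axl (A y))) = A := funext fun y => antiM_axl (hA y)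
  conv_lhs => rw [← hA', mCurl_antiM]
  simp only [transpose_sub, transpose_smul, transpose_one, transpose_transpose]

lemma contDiff_skewM_apply {n : WithTop ℕ∞} {P : (Fin 3 → ℝ) → Matrix (Fin 3) (Fin 3) ℝ}
    (hP : ∀ i j, ContDiff ℝ n fun y => P y i j) (i j : Fin 3) :
    ContDiff ℝ n fun y => skewM (P y) i j := by
  simp only [skewM, Matrix.smul_apply, Matrix.sub_apply, transpose_apply, smul_eq_mul]
  exact contDiff_const.mul ((hP i j).sub (hP j i))

lemma contDiff_axl_apply {n : WithTop ℕ∞} {A : (Fin 3 → ℝ) → Matrix (Fin 3) (Fin 3) ℝ}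
    (hA : ∀ i j, ContDiff ℝ n fun y => A y i j) (k : Fin 3) :
    ContDiff ℝ n fun y => axl (A y) k := by
  fin_cases k <;> simp only [axl] <;> apply hA

theorem curl_div_smul_one_sub_jac_identity {a : (Fin 3 → ℝ) → Fin 3 → ℝ}
    (ha : ∀ i, ContDiff ℝ 2 fun y => a y i) (x : Fin 3 → ℝ) :
    (-2 : ℝ) • mCurl (fun y => vdiv a y • 1 - jac a y) x +
      mCurl (fun y => trace (vdiv a y • 1 - jac a y) • (1 : Matrix (Fin 3) (Fin 3) ℝ)) x = 0 := by
  have hpd : ∀ i j, ContDiff ℝ 1 fun y => jac a y i j := fun i j => (ha i).pd j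
  have hdiv : ContDiff ℝ 1 (vdiv a) := by
    change ContDiff ℝ 1 fun y => ∑ i, pd i (fun z => a z i) y
    exact ContDiff.sum fun i _ => (ha i).pd i
  have htrace : ∀ y, trace (vdiv a y • 1 - jac a y) = 2 * vdiv a y := fun y => by
    rw [trace_sub, trace_smul, trace_one, trace_jac, Fintype.card_fin, smul_eq_mul]
    ring
  simp only [htrace, ← smul_smul, mCurl_const_smul]
  rw [mCurl_sub, mCurl_jac ha]
  · module
  · intro i j
    by_cases h : i = j <;> simp [one_apply, h, (hdiv.differentiable one_ne_zero) x]
  · exact fun i j => (hpd i j).differentiable one_ne_zero x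

/-- The identity −2 Curl((Curl(skew P))ᵀ) + Curl(tr((Curl(skew P))ᵀ)·𝟙) = 0. -/
theorem curl_curl_skew_identity
    (P : (Fin 3 → ℝ) → Matrix (Fin 3) (Fin 3) ℝ)
    (hP_diff : ∀ i j, ContDiff ℝ 2 (fun y => P y i j)) :
    ∀ x : Fin 3 → ℝ,
      (-2 : ℝ) • mCurl (fun y => (mCurl (fun z => skewM (P z)) y)ᵀ) x +
        mCurl (fun y =>
          Matrix.trace ((mCurl (fun z => skewM (P z)) y)ᵀ) •
            (1 : Matrix (Fin 3) (Fin 3) ℝ)) x = 0 := by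
  intro x
  simp only [transpose_mCurl_of_skew fun y => skewM_transpose (P y)]
  exact curl_div_smul_one_sub_jac_identity (contDiff_axl_apply (contDiff_skewM_apply hP_diff)) x
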